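/- Under the stated assumptions, for any x ∈ dom Ψ_{γ'}, any v ∈ ℝᵖ, any η > 0 and θ ∈ [0, 1], setting x̂⁺ := prox_{ηℛ}(x − ηv) and x⁺ := (1−θ)x + θx̂⁺, one has Ψ_γ(x⁺) ≤ Ψ_{γ'}(x) + (γ' − γ)B_ψ + (θ(1 + L_{Φ_γ}²η²)/(2L_{Φ_γ}))‖∇Φ_γ(x) − v‖² − (L_{Φ_γ}η²θ/4)‖G_η(x)‖² − (θ/2)(2/η − L_{Φ_γ}θ − 2L_{Φ_γ})‖x̂⁺ − x‖². -/

import Mathlib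

/-! Raising the smoothing parameter from `γ` to `γ'` lowers `φ` by at most `(γ' - γ) B_ψ`, since
`b ≤ B_ψ` on `dom ψ`; this accounts for the term `(γ' - γ) B_ψ`. The rest is the analysis of
one relaxed proximal-gradient step with the inexact gradient `v`: the descent lemma for `Φ_γ`,
convexity of `ℛ` on the segment `[x, x̂⁺]`, the three-point inequality of the proximal map tested
at `x`, and nonexpansiveness of the proximal map, which gives
`‖x - prox(x - η ∇Φ_γ(x))‖ ≤ ‖x̂⁺ - x‖ + η ‖∇Φ_γ(x) - v‖`. The cross term
`⟪∇Φ_γ(x) - v, x̂⁺ - x⟫` is then absorbed by completing two squares,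
`(a - L r)² / (2L) + L (η a - r)² / 4 ≥ 0`. -/

open scoped RealInnerProductSpace

open Set Filter Topology

section Smoothing

variable {α : Type*}

theorem IsCompact.bddAbove_image_sub [TopologicalSpace α] {s : Set α} (hs : IsCompact s)
    (hne : s.Nonempty) {f g : α → ℝ} (hf : ContinuousOn f s) (hg : LowerSemicontinuousOn g s) :
    BddAbove ((fun y => f y - g y) '' s) := by
  obtain ⟨M, hM⟩ := hs.bddAbove_image hf
  obtain ⟨a, -, ha⟩ := hg.exists_isMinOn hne hs
  refine ⟨M - g a, ?_⟩
  rintro _ ⟨y, hy, rfl⟩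
  linarith [hM (mem_image_of_mem f hy), isMinOn_iff.1 ha y hy]

theorem sSup_image_sub_mul_le_add {S : Set α} (hS : S.Nonempty) {g b : α → ℝ} {B σ σ' : ℝ}
    (hσ : σ ≤ σ') (hb : ∀ y ∈ S, b y ≤ B)
    (hbdd : BddAbove ((fun y => g y - σ' * b y) '' S)) :
    sSup ((fun y => g y - σ * b y) '' S) ≤
      sSup ((fun y => g y - σ' * b y) '' S) + (σ' - σ) * B := by
  refine csSup_le (hS.image _) ?_
  rintro _ ⟨y, hy, rfl⟩
  have hle : g y - σ' * b y ≤ sSup ((fun y => g y - σ' * b y) '' S) :=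
    le_csSup hbdd (mem_image_of_mem _ hy)
  have hbB : (σ' - σ) * b y ≤ (σ' - σ) * B :=
    mul_le_mul_of_nonneg_left (hb y hy) (sub_nonneg.2 hσ)
  linarith

end Smoothing

section Hilbert

variable {E : Type*} [NormedAddCommGroup E] [InnerProductSpace ℝ E]

theorem le_add_inner_add_sq_of_lipschitz_gradient [CompleteSpace E] {f : E → ℝ} {g : E → E}
    (hf : ∀ z, HasGradientAt f (g z) z) {L : ℝ} (hg : ∀ z z', ‖g z - g z'‖ ≤ L * ‖z - z'‖)
    (x y : E) : f y ≤ f x + ⟪g x, y - x⟫ + L / 2 * ‖y - x‖ ^ 2 := by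
  set d := y - x
  set q : ℝ → ℝ := fun t => f (x + t • d) - t * ⟪g x, d⟫ - L / 2 * t ^ 2 * ‖d‖ ^ 2
  have hq : ∀ t, HasDerivAt q (⟪g (x + t • d) - g x, d⟫ - L * t * ‖d‖ ^ 2) t := by
    intro t
    have hline : HasDerivAt (fun t : ℝ => x + t • d) d t := by
      simpa using ((hasDerivAt_id t).smul_const d).const_add x
    have hfline : HasDerivAt (fun t : ℝ => f (x + t • d)) ⟪g (x + t • d), d⟫ t := by
      simpa [Function.comp_def, InnerProductSpace.toDual_apply_apply] using
        (hf (x + t • d)).hasFDerivAt.comp_hasDerivAt t hline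
    refine ((hfline.sub ((hasDerivAt_id t).mul_const ⟪g x, d⟫)).sub
      (((hasDerivAt_pow 2 t).const_mul (L / 2)).mul_const (‖d‖ ^ 2))).congr_deriv ?_
    rw [inner_sub_left]
    ring
  have hq_nonpos : ∀ t ∈ interior (Icc (0 : ℝ) 1), deriv q t ≤ 0 := by
    intro t ht
    rw [interior_Icc] at ht
    have hlip : ‖g (x + t • d) - g x‖ ≤ L * t * ‖d‖ := by
      simpa [norm_smul, abs_of_pos ht.1, mul_assoc] using hg (x + t • d) x
    rw [(hq t).deriv]
    nlinarith [real_inner_le_norm (g (x + t • d) - g x) d, norm_nonneg d]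
  have hanti : AntitoneOn q (Icc 0 1) :=
    antitoneOn_of_deriv_nonpos (convex_Icc 0 1)
      (fun t _ => (hq t).continuousAt.continuousWithinAt)
      (fun t _ => (hq t).differentiableAt.differentiableWithinAt) hq_nonpos
  have h01 := hanti (left_mem_Icc.2 zero_le_one) (right_mem_Icc.2 zero_le_one) zero_le_one
  simp [q, d] at h01
  linarith

theorem StrongConvexOn.add_sq_le_of_isMinOn {s : Set E} {m : ℝ} {f : E → ℝ}
    (hf : StrongConvexOn s m f) {w z : E} (hw : w ∈ s) (hz : z ∈ s) (hmin : IsMinOn f s w) :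
    f w + m / 2 * ‖z - w‖ ^ 2 ≤ f z := by
  -- compare `f w` with `f ((1 - t) • w + t • z)` and let `t → 0⁺`
  have hbound : ∀ t ∈ Ioo (0 : ℝ) 1, f w + (1 - t) * (m / 2 * ‖z - w‖ ^ 2) ≤ f z := by
    rintro t ⟨ht0, ht1⟩
    have hconv := hf.2 hw hz (sub_nonneg.2 ht1.le) ht0.le (sub_add_cancel 1 t)
    have hmin' :=
      isMinOn_iff.1 hmin _ (hf.1 hw hz (sub_nonneg.2 ht1.le) ht0.le (sub_add_cancel 1 t))
    rw [smul_eq_mul, smul_eq_mul, norm_sub_rev] at hconv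
    refine le_of_mul_le_mul_left ?_ ht0
    linarith
  have hlim : Tendsto (fun t : ℝ => f w + (1 - t) * (m / 2 * ‖z - w‖ ^ 2))
      (𝓝[>] 0) (𝓝 (f w + m / 2 * ‖z - w‖ ^ 2)) := by
    apply tendsto_nhdsWithin_of_tendsto_nhds
    convert (by fun_prop : Continuous fun t : ℝ => f w + (1 - t) * (m / 2 * ‖z - w‖ ^ 2)).tendsto 0
      using 2
    ring
  exact le_of_tendsto hlim (eventually_of_mem (Ioo_mem_nhdsGT one_pos) hbound)

theorem ConvexOn.strongConvexOn_add_norm_sub_sq_div {s : Set E} {R : E → ℝ} (hR : ConvexOn ℝ s R)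
    {η : ℝ} (hη : 0 < η) (u : E) :
    StrongConvexOn s η⁻¹ (fun y => R y + ‖y - u‖ ^ 2 / (2 * η)) := by
  rw [strongConvexOn_iff_convex]
  refine ((hR.add ((-η⁻¹ • (innerSL ℝ u).toLinearMap).convexOn hR.1)).add_const
    (‖u‖ ^ 2 / (2 * η))).congr fun y _ => ?_
  simp only [Pi.add_apply, LinearMap.smul_apply, ContinuousLinearMap.coe_coe, innerSL_apply_apply,
    smul_eq_mul, norm_sub_sq_real, real_inner_comm u y]
  field_simp
  ring

/-- `w = prox_{ηR}(u)`, with `R` extended by `+∞` off `s`. -/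
def IsProxPoint (R : E → ℝ) (s : Set E) (η : ℝ) (u w : E) : Prop :=
  w ∈ s ∧ IsMinOn (fun y => R y + ‖y - u‖ ^ 2 / (2 * η)) s w

namespace IsProxPoint

variable {s : Set E} {R : E → ℝ} {η : ℝ}

/-- The three-point inequality. -/
theorem add_norm_sub_sq_div_le (hR : ConvexOn ℝ s R) (hη : 0 < η) {u w z : E}
    (hw : IsProxPoint R s η u w) (hz : z ∈ s) :
    R w + ‖w - u‖ ^ 2 / (2 * η) + ‖z - w‖ ^ 2 / (2 * η) ≤ R z + ‖z - u‖ ^ 2 / (2 * η) := by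
  have h := (hR.strongConvexOn_add_norm_sub_sq_div hη u).add_sq_le_of_isMinOn hw.1 hz hw.2
  have e : η⁻¹ / 2 * ‖z - w‖ ^ 2 = ‖z - w‖ ^ 2 / (2 * η) := by field_simp
  simpa only [e] using h

theorem norm_sub_le (hR : ConvexOn ℝ s R) (hη : 0 < η) {u₁ u₂ w₁ w₂ : E}
    (hw₁ : IsProxPoint R s η u₁ w₁) (hw₂ : IsProxPoint R s η u₂ w₂) :
    ‖w₁ - w₂‖ ≤ ‖u₁ - u₂‖ := by
  have h₁ := hw₁.add_norm_sub_sq_div_le hR hη hw₂.1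
  have h₂ := hw₂.add_norm_sub_sq_div_le hR hη hw₁.1
  have hsq : ‖w₁ - w₂‖ ^ 2 ≤ ⟪w₁ - w₂, u₁ - u₂⟫ := by
    have e : ‖w₂ - u₁‖ ^ 2 + ‖w₁ - u₂‖ ^ 2 - ‖w₁ - u₁‖ ^ 2 - ‖w₂ - u₂‖ ^ 2
        = 2 * ⟪w₁ - w₂, u₁ - u₂⟫ := by
      simp only [norm_sub_sq_real, inner_sub_left, inner_sub_right, real_inner_comm]
      ring
    have h : 2 * ‖w₁ - w₂‖ ^ 2 / (2 * η)
        ≤ (‖w₂ - u₁‖ ^ 2 + ‖w₁ - u₂‖ ^ 2 - ‖w₁ - u₁‖ ^ 2 - ‖w₂ - u₂‖ ^ 2) / (2 * η) := by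
      rw [norm_sub_rev w₂ w₁] at h₁
      simp only [add_div, sub_div, mul_div_assoc]
      linarith
    rw [e, div_le_div_iff_of_pos_right (by positivity)] at h
    linarith
  nlinarith [real_inner_le_norm (w₁ - w₂) (u₁ - u₂), norm_nonneg (w₁ - w₂), norm_nonneg (u₁ - u₂)]

theorem add_inner_add_sq_le (hR : ConvexOn ℝ s R) (hη : 0 < η) {x v w : E}
    (hw : IsProxPoint R s η (x - η • v) w) (hx : x ∈ s) :
    R w + ⟪w - x, v⟫ + ‖w - x‖ ^ 2 / η ≤ R x := by
  have h := hw.add_norm_sub_sq_div_le hR hη hx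
  rw [show w - (x - η • v) = (w - x) + η • v by abel, show x - (x - η • v) = η • v by abel,
    norm_add_sq_real, norm_sub_rev x w, real_inner_smul_right] at h
  have e : (‖w - x‖ ^ 2 + 2 * (η * ⟪w - x, v⟫) + ‖η • v‖ ^ 2) / (2 * η) + ‖w - x‖ ^ 2 / (2 * η)
      = ⟪w - x, v⟫ + ‖w - x‖ ^ 2 / η + ‖η • v‖ ^ 2 / (2 * η) := by
    field_simp
    ring
  linarith

theorem norm_sub_le_norm_sub_add (hR : ConvexOn ℝ s R) (hη : 0 < η) {x v v' w w' : E}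
    (hw : IsProxPoint R s η (x - η • v) w) (hw' : IsProxPoint R s η (x - η • v') w') :
    ‖x - w'‖ ≤ ‖w - x‖ + η * ‖v' - v‖ := by
  have h := hw.norm_sub_le hR hη hw'
  rw [show x - η • v - (x - η • v') = η • (v' - v) by module, norm_smul,
    Real.norm_of_nonneg hη.le] at h
  calc ‖x - w'‖ ≤ ‖x - w‖ + ‖w - w'‖ := norm_sub_le_norm_sub_add_norm_sub x w w'
    _ ≤ ‖w - x‖ + η * ‖v' - v‖ := by rw [norm_sub_rev x w]; gcongr

end IsProxPoint

theorem relaxed_prox_step_le [CompleteSpace E] {f : E → ℝ} {g : E → E}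
    (hf : ∀ z, HasGradientAt f (g z) z) {L : ℝ} (hL : 0 < L)
    (hg : ∀ z z', ‖g z - g z'‖ ≤ L * ‖z - z'‖) {s : Set E} {R : E → ℝ} (hR : ConvexOn ℝ s R)
    {x v w w' : E} {η θ : ℝ} (hx : x ∈ s) (hη : 0 < η) (hθ₀ : 0 ≤ θ) (hθ₁ : θ ≤ 1)
    (hw : IsProxPoint R s η (x - η • v) w) (hw' : IsProxPoint R s η (x - η • g x) w') :
    f ((1 - θ) • x + θ • w) + R ((1 - θ) • x + θ • w) ≤
      f x + R x + θ * (1 + L ^ 2 * η ^ 2) / (2 * L) * ‖g x - v‖ ^ 2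
        - L * η ^ 2 * θ / 4 * ‖η⁻¹ • (x - w')‖ ^ 2
        - θ / 2 * (2 / η - L * θ - 2 * L) * ‖w - x‖ ^ 2 := by
  set a := ‖g x - v‖
  set r := ‖w - x‖
  have hf_step : f ((1 - θ) • x + θ • w) ≤ f x + θ * ⟪g x, w - x⟫ + L / 2 * θ ^ 2 * r ^ 2 := by
    have h := le_add_inner_add_sq_of_lipschitz_gradient hf hg x ((1 - θ) • x + θ • w)
    rwa [show (1 - θ) • x + θ • w - x = θ • (w - x) by module, real_inner_smul_right, norm_smul,
      Real.norm_of_nonneg hθ₀, mul_pow, ← mul_assoc] at h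
  have hR_step : R ((1 - θ) • x + θ • w) ≤ (1 - θ) * R x + θ * R w :=
    hR.2 hx hw.1 (by linarith) hθ₀ (by ring)
  have hprox := hw.add_inner_add_sq_le hR hη hx
  have hgap_sq : ‖x - w'‖ ^ 2 ≤ (r + η * a) ^ 2 := by
    gcongr
    exact hw.norm_sub_le_norm_sub_add hR hη hw'
  have hcs : ⟪g x - v, w - x⟫ ≤ a * r := real_inner_le_norm _ _
  have hsquares :
      a * r + L * (r + η * a) ^ 2 / 4 ≤ a ^ 2 / (2 * L) + L * η ^ 2 * a ^ 2 / 2 + L * r ^ 2 := by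
    have e : a ^ 2 / (2 * L) + L * η ^ 2 * a ^ 2 / 2 + L * r ^ 2 - (a * r + L * (r + η * a) ^ 2 / 4)
        = (a - L * r) ^ 2 / (2 * L) + L * (η * a - r) ^ 2 / 4 := by
      field_simp
      ring
    linarith [show 0 ≤ (a - L * r) ^ 2 / (2 * L) + L * (η * a - r) ^ 2 / 4 by positivity]
  have hsplit : ⟪g x, w - x⟫ = ⟪g x - v, w - x⟫ + ⟪w - x, v⟫ := by
    rw [inner_sub_left, real_inner_comm (w - x) v]
    ring
  have hG : ‖η⁻¹ • (x - w')‖ ^ 2 = ‖x - w'‖ ^ 2 / η ^ 2 := by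
    rw [norm_smul, norm_inv, Real.norm_of_nonneg hη.le]
    field_simp
  have e : θ * (1 + L ^ 2 * η ^ 2) / (2 * L) * a ^ 2 - L * η ^ 2 * θ / 4 * (‖x - w'‖ ^ 2 / η ^ 2)
        - θ / 2 * (2 / η - L * θ - 2 * L) * r ^ 2
      = θ * (a ^ 2 / (2 * L) + L * η ^ 2 * a ^ 2 / 2 + L * r ^ 2) - L * θ / 4 * ‖x - w'‖ ^ 2
        - θ * (r ^ 2 / η) + L / 2 * θ ^ 2 * r ^ 2 := by
    field_simp
    ring
  rw [hsplit] at hf_step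
  rw [hG]
  linarith [mul_le_mul_of_nonneg_left hsquares hθ₀, mul_le_mul_of_nonneg_left hprox hθ₀,
    mul_le_mul_of_nonneg_left hcs hθ₀,
    mul_le_mul_of_nonneg_left hgap_sq (by positivity : 0 ≤ L * θ / 4)]

end Hilbert

theorem stmt_9_general {p q n : ℕ}
    (K : EuclideanSpace ℝ (Fin n) →L[ℝ] EuclideanSpace ℝ (Fin q))
    (ψ : EuclideanSpace ℝ (Fin n) → ℝ) (dψ : Set (EuclideanSpace ℝ (Fin n)))
    -- ψ proper, closed, convex with bounded domain
    (hdψ_ne : dψ.Nonempty) (hdψ_closed : IsClosed dψ)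
    (hψ_lsc : LowerSemicontinuousOn ψ dψ)
    (Mψ : ℝ) (hMψ : ∀ y ∈ dψ, ‖y‖ ≤ Mψ)
    -- the proximity function b and Bψ := sup b over dom ψ
    (b : EuclideanSpace ℝ (Fin n) → ℝ)
    (hb_smooth : ContDiff ℝ 1 b)
    (Bψ : ℝ) (hBψ : Bψ = sSup (b '' dψ))
    -- the smoothed functions φ_γ and φ_{γ'}, with 0 < γ ≤ γ'
    (γ γ' : ℝ) (hγ' : γ ≤ γ')
    (φ : ℝ → EuclideanSpace ℝ (Fin q) → ℝ)
    (hφ : ∀ s u, φ s u = sSup ((fun y => ⟪u, K y⟫ - ψ y - s * b y) '' dψ))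
    -- F, and Φ_γ := φ_γ ∘ F differentiable with L_{Φ_γ}-Lipschitz gradient
    (F : EuclideanSpace ℝ (Fin p) → EuclideanSpace ℝ (Fin q))
    (gΦ : EuclideanSpace ℝ (Fin p) → EuclideanSpace ℝ (Fin p))
    (hgΦ : ∀ x, HasGradientAt (fun z => φ γ (F z)) (gΦ x) x)
    (LΦ : ℝ) (hLΦ_pos : 0 < LΦ)
    (hLip : ∀ x x', ‖gΦ x - gΦ x'‖ ≤ LΦ * ‖x - x'‖)
    -- ℛ proper, closed, convex (with effective domain dR), and its proximal operator
    (ℛ : EuclideanSpace ℝ (Fin p) → ℝ) (dR : Set (EuclideanSpace ℝ (Fin p)))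
    (hℛ_convex : ConvexOn ℝ dR ℛ)
    (prox : ℝ → EuclideanSpace ℝ (Fin p) → EuclideanSpace ℝ (Fin p))
    (hprox : ∀ η : ℝ, 0 < η → ∀ z, prox η z ∈ dR ∧
      IsMinOn (fun y => ℛ y + ‖y - z‖ ^ 2 / (2 * η)) dR (prox η z))
    -- the data of the step
    (x : EuclideanSpace ℝ (Fin p)) (hx : x ∈ dR)
    (v : EuclideanSpace ℝ (Fin p))
    (η θ : ℝ) (hη : 0 < η) (hθ : θ ∈ Set.Icc (0 : ℝ) 1) :
    φ γ (F ((1 - θ) • x + θ • prox η (x - η • v))) +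
        ℛ ((1 - θ) • x + θ • prox η (x - η • v)) ≤
      φ γ' (F x) + ℛ x + (γ' - γ) * Bψ
        + θ * (1 + LΦ ^ 2 * η ^ 2) / (2 * LΦ) * ‖gΦ x - v‖ ^ 2
        - LΦ * η ^ 2 * θ / 4 * ‖η⁻¹ • (x - prox η (x - η • gΦ x))‖ ^ 2
        - θ / 2 * (2 / η - LΦ * θ - 2 * LΦ) * ‖prox η (x - η • v) - x‖ ^ 2 := by
  obtain ⟨hθ₀, hθ₁⟩ := hθ
  have hcpt : IsCompact dψ := Metric.isCompact_of_isClosed_isBounded hdψ_closed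
    (isBounded_iff_forall_norm_le.2 ⟨Mψ, hMψ⟩)
  have hb_le : ∀ y ∈ dψ, b y ≤ Bψ := fun y hy =>
    hBψ ▸ le_csSup (hcpt.bddAbove_image hb_smooth.continuous.continuousOn) (mem_image_of_mem b hy)
  have hsmooth : φ γ (F x) ≤ φ γ' (F x) + (γ' - γ) * Bψ := by
    rw [hφ, hφ]
    refine sSup_image_sub_mul_le_add (g := fun y => ⟪F x, K y⟫ - ψ y) hdψ_ne hγ' hb_le ?_
    have hb := hb_smooth.continuous
    convert hcpt.bddAbove_image_sub hdψ_ne (f := fun y => ⟪F x, K y⟫ - γ' * b y)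
      (by fun_prop) hψ_lsc using 2
    ring
  linarith [relaxed_prox_step_le hgΦ hLΦ_pos hLip hℛ_convex hx hη hθ₀ hθ₁
    (hprox η hη (x - η • v)) (hprox η hη (x - η • gΦ x))]

/-- One-step descent bound: for `x ∈ dom Ψ_{γ'}`, any `v`, `η > 0`, `θ ∈ [0,1]`,
with `x̂⁺ := prox_{ηℛ}(x − ηv)` and `x⁺ := (1−θ)x + θx̂⁺`,
`Ψ_γ(x⁺) ≤ Ψ_{γ'}(x) + (γ' − γ)B_ψ + (θ(1 + L²η²)/(2L))‖∇Φ_γ(x) − v‖²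
  − (Lη²θ/4)‖G_η(x)‖² − (θ/2)(2/η − Lθ − 2L)‖x̂⁺ − x‖²`, where `L = L_{Φ_γ}`. -/
theorem stmt_9 {p q n : ℕ}
    (K : EuclideanSpace ℝ (Fin n) →L[ℝ] EuclideanSpace ℝ (Fin q))
    (ψ : EuclideanSpace ℝ (Fin n) → ℝ) (dψ : Set (EuclideanSpace ℝ (Fin n)))
    -- ψ proper, closed, convex with bounded domain
    (hdψ_ne : dψ.Nonempty) (hdψ_closed : IsClosed dψ) (hdψ_convex : Convex ℝ dψ)
    (hψ_convex : ConvexOn ℝ dψ ψ) (hψ_lsc : LowerSemicontinuousOn ψ dψ)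
    (Mψ : ℝ) (hMψ : ∀ y ∈ dψ, ‖y‖ ≤ Mψ)
    -- the proximity function b and Bψ := sup b over dom ψ
    (b : EuclideanSpace ℝ (Fin n) → ℝ)
    (hb_nonneg : ∀ y ∈ dψ, 0 ≤ b y)
    (hb_smooth : ContDiff ℝ 1 b)
    (hb_sconv : StrongConvexOn dψ 1 b)
    (hb_min : ∃ y ∈ dψ, b y = 0)
    (Bψ : ℝ) (hBψ : Bψ = sSup (b '' dψ))
    -- the smoothed functions φ_γ and φ_{γ'}, with 0 < γ ≤ γ'
    (γ γ' : ℝ) (hγ : 0 < γ) (hγ' : γ ≤ γ')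
    (φ : ℝ → EuclideanSpace ℝ (Fin q) → ℝ)
    (hφ : ∀ s u, φ s u = sSup ((fun y => ⟪u, K y⟫ - ψ y - s * b y) '' dψ))
    -- F, and Φ_γ := φ_γ ∘ F differentiable with L_{Φ_γ}-Lipschitz gradient
    (F : EuclideanSpace ℝ (Fin p) → EuclideanSpace ℝ (Fin q))
    (gΦ : EuclideanSpace ℝ (Fin p) → EuclideanSpace ℝ (Fin p))
    (hgΦ : ∀ x, HasGradientAt (fun z => φ γ (F z)) (gΦ x) x)
    (LΦ : ℝ) (hLΦ_pos : 0 < LΦ)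
    (hLip : ∀ x x', ‖gΦ x - gΦ x'‖ ≤ LΦ * ‖x - x'‖)
    -- ℛ proper, closed, convex (with effective domain dR), and its proximal operator
    (ℛ : EuclideanSpace ℝ (Fin p) → ℝ) (dR : Set (EuclideanSpace ℝ (Fin p)))
    (hdR_ne : dR.Nonempty) (hdR_closed : IsClosed dR) (hdR_convex : Convex ℝ dR)
    (hℛ_convex : ConvexOn ℝ dR ℛ) (hℛ_lsc : LowerSemicontinuousOn ℛ dR)
    (prox : ℝ → EuclideanSpace ℝ (Fin p) → EuclideanSpace ℝ (Fin p))
    (hprox : ∀ η : ℝ, 0 < η → ∀ z, prox η z ∈ dR ∧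
      IsMinOn (fun y => ℛ y + ‖y - z‖ ^ 2 / (2 * η)) dR (prox η z))
    -- the data of the step
    (x : EuclideanSpace ℝ (Fin p)) (hx : x ∈ dR)
    (v : EuclideanSpace ℝ (Fin p))
    (η θ : ℝ) (hη : 0 < η) (hθ : θ ∈ Set.Icc (0 : ℝ) 1) :
    φ γ (F ((1 - θ) • x + θ • prox η (x - η • v))) +
        ℛ ((1 - θ) • x + θ • prox η (x - η • v)) ≤
      φ γ' (F x) + ℛ x + (γ' - γ) * Bψ
        + θ * (1 + LΦ ^ 2 * η ^ 2) / (2 * LΦ) * ‖gΦ x - v‖ ^ 2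
        - LΦ * η ^ 2 * θ / 4 * ‖η⁻¹ • (x - prox η (x - η • gΦ x))‖ ^ 2
        - θ / 2 * (2 / η - LΦ * θ - 2 * LΦ) * ‖prox η (x - η • v) - x‖ ^ 2 :=
  stmt_9_general K ψ dψ hdψ_ne hdψ_closed hψ_lsc Mψ hMψ b hb_smooth Bψ hBψ γ γ' hγ' φ hφ F gΦ hgΦ LΦ
    hLΦ_pos hLip ℛ dR hℛ_convex prox hprox x hx v η θ hη hθ
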